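/- arXiv:2303.09002 — 6 statements merged into one kernel-verified Lean document; each statement's English description precedes it below -/
import Mathlib

section
/- Fix integers n, m, l ≥ 1 and real matrices E ∈ ℝ^{n×n}, F ∈ ℝ^{n×m}, G ∈ ℝ^{n×l}, H ∈ ℝ^{m×n}. Let a = (a_0, …, a_{n−1}) ∈ ℝ^{1×n} be a row vector satisfying E^n = a_0 I_n + a_1 E + ⋯ + a_{n−1} E^{n−1}. Fix i ∈ {1,…,m} and assume the matrix F_x^i ∈ ℝ^{n×n} is invertible. Then the following matrix identity holds: H_i · [ F_u + E^n (F_x^i)^{−1}(P_i − M_u^i) , F_y − E^n (F_x^i)^{−1} M_y^i ] = [ H_i , 1 ] · [[ F_u − (a ⊗ I_n) M̃_u , F_y − (a ⊗ I_n) M̃_y ] ; [ a P_i , 0 ]], where the left-hand side is a 1×(m+l)n row vector and on the right-hand side [H_i, 1] ∈ ℝ^{1×(n+1)} multiplies the (n+1)×(m+l)n block matrix whose top block rows are [F_u − (a ⊗ I_n) M̃_u , F_y − (a ⊗ I_n) M̃_y] and whose last row is [a P_i , 0]. (Row-wise form of the data-driven separation principle, Theorem 1.) -/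
open Matrix

noncomputable section

namespace LQGPaper

variable {n m l : ℕ}

/-- Row block matrix `(E^{n-1}B, E^{n-2}B, …, B) ∈ ℝ^{n×nk}`. -/
def Frow {k : ℕ} (E : Matrix (Fin n) (Fin n) ℝ) (B : Matrix (Fin n) (Fin k) ℝ) :
    Matrix (Fin n) (Fin n × Fin k) ℝ :=
  Matrix.of fun i q => (E ^ (n - 1 - (q.1 : ℕ)) * B) i q.2

/-- Strictly block-lower-triangular matrix (`M̃_u`/`M̃_y` style) whose `(i,j)` block
(0-indexed, blocks of size `n × k`) is `E^{i-j-1} B` for `i > j` and `0` otherwise. -/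
def Mlow {k : ℕ} (E : Matrix (Fin n) (Fin n) ℝ) (B : Matrix (Fin n) (Fin k) ℝ) :
    Matrix (Fin n × Fin n) (Fin n × Fin k) ℝ :=
  Matrix.of fun p q =>
    if (q.1 : ℕ) < (p.1 : ℕ) then (E ^ ((p.1 : ℕ) - (q.1 : ℕ) - 1) * B) p.2 q.2 else 0

/-- Strictly block-lower-triangular matrix (`M_u`/`M_y` style) whose `(i,j)` block
(0-indexed, blocks of size `m × k`) is `H E^{i-j-1} B` for `i > j` and `0` otherwise. -/
def MlowH {k : ℕ} (E : Matrix (Fin n) (Fin n) ℝ) (B : Matrix (Fin n) (Fin k) ℝ)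
    (H : Matrix (Fin m) (Fin n) ℝ) :
    Matrix (Fin n × Fin m) (Fin n × Fin k) ℝ :=
  Matrix.of fun p q =>
    if (q.1 : ℕ) < (p.1 : ℕ) then (H * E ^ ((p.1 : ℕ) - (q.1 : ℕ) - 1) * B) p.2 q.2 else 0

/-- The block column `F_x = (H; HE; …; HE^{n-1}) ∈ ℝ^{mn×n}`. -/
def Fx (E : Matrix (Fin n) (Fin n) ℝ) (H : Matrix (Fin m) (Fin n) ℝ) :
    Matrix (Fin n × Fin m) (Fin n) ℝ :=
  Matrix.of fun p j => (H * E ^ (p.1 : ℕ)) p.2 j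

/-- The selection matrix `P_i = I_n ⊗ e_iᵀ ∈ ℝ^{n×nm}`. -/
def Pmat (n : ℕ) {m : ℕ} (i : Fin m) : Matrix (Fin n) (Fin n × Fin m) ℝ :=
  Matrix.of fun r q => if r = q.1 ∧ q.2 = i then 1 else 0

/-- The Kronecker product `a ⊗ I_q ∈ ℝ^{q×nq}` of a row vector `a ∈ ℝ^{1×n}`
with the identity `I_q`. -/
def aKron (a : Fin n → ℝ) (q : ℕ) : Matrix (Fin q) (Fin n × Fin q) ℝ :=
  Matrix.of fun i p => if i = p.2 then a p.1 else 0

/-- The row vector `a ∈ ℝ^{1×n}` as a `1 × n` matrix. -/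
def aRow (a : Fin n → ℝ) : Matrix (Fin 1) (Fin n) ℝ := Matrix.of fun _ k => a k

/-- The `i`-th row of `H` as a `1 × n` matrix. -/
def Hrow (H : Matrix (Fin m) (Fin n) ℝ) (i : Fin m) : Matrix (Fin 1) (Fin n) ℝ :=
  Matrix.of fun _ j => H i j

/-- The estimation matrix
`L_est = [[F_u − (a⊗I_n)M̃_u , F_y − (a⊗I_n)M̃_y]; [a⊗I_m , 0]] ∈ ℝ^{(n+m)×(m+l)n}`. -/
def Lest (E : Matrix (Fin n) (Fin n) ℝ) (F : Matrix (Fin n) (Fin m) ℝ)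
    (G : Matrix (Fin n) (Fin l) ℝ) (a : Fin n → ℝ) :
    Matrix (Fin n ⊕ Fin m) ((Fin n × Fin m) ⊕ (Fin n × Fin l)) ℝ :=
  Matrix.fromBlocks (Frow E F - aKron a n * Mlow E F) (Frow E G - aKron a n * Mlow E G)
    (aKron a m) 0

/-- A compensator trajectory: `x̂(t+1) = E x̂(t) + F u(t) + G y(t+1)`, `u(t) = H x̂(t)`. -/
def IsCompTraj (E : Matrix (Fin n) (Fin n) ℝ) (F : Matrix (Fin n) (Fin m) ℝ)
    (G : Matrix (Fin n) (Fin l) ℝ) (H : Matrix (Fin m) (Fin n) ℝ)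
    (xh : ℕ → Fin n → ℝ) (u : ℕ → Fin m → ℝ) (y : ℕ → Fin l → ℝ) : Prop :=
  (∀ t, xh (t + 1) = E.mulVec (xh t) + F.mulVec (u t) + G.mulVec (y (t + 1))) ∧
    ∀ t, u t = H.mulVec (xh t)

/-- The stacked vector `(v(t); v(t+1); …; v(t+r-1))`. -/
def stack {k : ℕ} (v : ℕ → Fin k → ℝ) (r t : ℕ) : Fin r × Fin k → ℝ :=
  fun p => v (t + (p.1 : ℕ)) p.2


section Aux
variable {n m l : ℕ}

lemma Pmat_mul_apply {ι : Type*} (i : Fin m) (A : Matrix (Fin n × Fin m) ι ℝ)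
    (r : Fin n) (c : ι) : (Pmat n i * A) r c = A (r, i) c := by
  simp [Matrix.mul_apply, Pmat, Fintype.sum_prod_type, ite_and]

lemma aKron_mul_apply {ι : Type*} (a : Fin n → ℝ) (M : Matrix (Fin n × Fin n) ι ℝ)
    (r : Fin n) (c : ι) :
    (aKron a n * M) r c = ∑ j : Fin n, a j * M (j, r) c := by
  simp only [Matrix.mul_apply, aKron, Matrix.of_apply, Fintype.sum_prod_type, ite_mul, zero_mul]
  refine Finset.sum_congr rfl fun j _ => ?_
  rw [Finset.sum_ite_eq, if_pos (Finset.mem_univ r)]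

lemma key1 (E : Matrix (Fin n) (Fin n) ℝ) (H : Matrix (Fin m) (Fin n) ℝ)
    (a : Fin n → ℝ) (ha : E ^ n = ∑ k : Fin n, a k • E ^ (k : ℕ)) (i : Fin m) :
    Hrow H i * E ^ n = aRow a * (Pmat n i * Fx E H) := by
  ext x j
  rw [Matrix.mul_apply, Matrix.mul_apply]
  simp only [Pmat_mul_apply, Hrow, aRow, Fx, Matrix.of_apply]
  rw [ha]
  simp only [Matrix.sum_apply, Matrix.smul_apply, smul_eq_mul, Matrix.mul_apply,
    Finset.mul_sum]
  rw [Finset.sum_comm]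
  exact Finset.sum_congr rfl fun k _ => Finset.sum_congr rfl fun r _ => by ring

lemma key2 {k : ℕ} (E : Matrix (Fin n) (Fin n) ℝ) (B : Matrix (Fin n) (Fin k) ℝ)
    (H : Matrix (Fin m) (Fin n) ℝ) (a : Fin n → ℝ) (i : Fin m) :
    aRow a * (Pmat n i * MlowH E B H) = Hrow H i * (aKron a n * Mlow E B) := by
  ext x q
  rw [Matrix.mul_apply, Matrix.mul_apply]
  simp only [Pmat_mul_apply, aKron_mul_apply, aRow, Hrow, MlowH, Mlow, Matrix.of_apply]
  simp only [Finset.mul_sum]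
  rw [Finset.sum_comm]
  refine Finset.sum_congr rfl fun c _ => ?_
  by_cases h : (q.1 : ℕ) < (c : ℕ)
  · simp only [h, if_true, mul_ite, mul_zero]
    simp only [Matrix.mul_apply, Finset.mul_sum, Finset.sum_mul]
    rw [Finset.sum_comm]
    exact Finset.sum_congr rfl fun r _ => Finset.sum_congr rfl fun s _ => by ring
  · simp [h]

end Aux

/-- row-wise data-driven separation, Theorem 1. -/
theorem rowwise_separation (n m l : ℕ) (hn : 1 ≤ n) (hm : 1 ≤ m) (hl : 1 ≤ l)
    (E : Matrix (Fin n) (Fin n) ℝ) (F : Matrix (Fin n) (Fin m) ℝ)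
    (G : Matrix (Fin n) (Fin l) ℝ) (H : Matrix (Fin m) (Fin n) ℝ)
    (a : Fin n → ℝ) (ha : E ^ n = ∑ k : Fin n, a k • E ^ (k : ℕ))
    (i : Fin m) (hFxi : IsUnit (Pmat n i * Fx E H)) :
    Hrow H i *
      Matrix.fromCols
        (Frow E F +
          E ^ n * (Pmat n i * Fx E H)⁻¹ * (Pmat n i - Pmat n i * MlowH E F H))
        (Frow E G - E ^ n * (Pmat n i * Fx E H)⁻¹ * (Pmat n i * MlowH E G H)) =
    Matrix.fromCols (Hrow H i) (1 : Matrix (Fin 1) (Fin 1) ℝ) *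
      Matrix.fromBlocks (Frow E F - aKron a n * Mlow E F)
        (Frow E G - aKron a n * Mlow E G) (aRow a * Pmat n i) 0 := by
  have hdet : IsUnit (Pmat n i * Fx E H).det := (Matrix.isUnit_iff_isUnit_det _).mp hFxi
  have hinv : Hrow H i * (E ^ n * (Pmat n i * Fx E H)⁻¹) = aRow a := by
    rw [← Matrix.mul_assoc, key1 E H a ha i, Matrix.mul_assoc,
      Matrix.mul_nonsing_inv _ hdet, Matrix.mul_one]
  have h1 : Hrow H i *
      (Frow E F + E ^ n * (Pmat n i * Fx E H)⁻¹ * (Pmat n i - Pmat n i * MlowH E F H)) =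
      Hrow H i * (Frow E F - aKron a n * Mlow E F) + (1 : Matrix (Fin 1) (Fin 1) ℝ) * (aRow a * Pmat n i) := by
    rw [Matrix.mul_add,
      ← Matrix.mul_assoc (Hrow H i) (E ^ n * (Pmat n i * Fx E H)⁻¹), hinv,
      Matrix.mul_sub (aRow a), key2 E F H a i, Matrix.one_mul, Matrix.mul_sub]
    abel
  have h2 : Hrow H i *
      (Frow E G - E ^ n * (Pmat n i * Fx E H)⁻¹ * (Pmat n i * MlowH E G H)) =
      Hrow H i * (Frow E G - aKron a n * Mlow E G) + (1 : Matrix (Fin 1) (Fin 1) ℝ) * (0 : Matrix (Fin 1) (Fin n × Fin l) ℝ) := by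
    rw [Matrix.mul_sub,
      ← Matrix.mul_assoc (Hrow H i) (E ^ n * (Pmat n i * Fx E H)⁻¹), hinv,
      key2 E G H a i, Matrix.mul_sub, Matrix.mul_zero, add_zero]
  rw [Matrix.mul_fromCols, Matrix.fromCols_mul_fromBlocks, h1, h2]

end LQGPaper
end
end

section
/- Fix integers n, m, l ≥ 1 and real matrices E ∈ ℝ^{n×n}, F ∈ ℝ^{n×m}, G ∈ ℝ^{n×l}, H ∈ ℝ^{m×n}, and let a = (a_0, …, a_{n−1}) ∈ ℝ^{1×n} be a row vector satisfying E^n = a_0 I_n + a_1 E + ⋯ + a_{n−1} E^{n−1}. Then for every compensator trajectory (x̂, u, y) and every t ≥ 0, the input satisfies u(t+n) = [ H , I_m ] · L_est · (U_n(t) ; Y_n(t+1)), where (U_n(t) ; Y_n(t+1)) ∈ ℝ^{(m+l)n} is the stacked vector of the last n inputs and outputs. In particular, the optimal LQG input at time t+n is a fixed static linear function of the window of n past inputs and n past outputs, and this static gain factors as the product of the control matrix [H, I_m] and the estimation matrix L_est. -/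
open Matrix

noncomputable section

namespace LQGPaper

variable {n m l : ℕ}

lemma mulVec_sum' {p q : ℕ} {ι : Type*} (s : Finset ι) (M : Matrix (Fin p) (Fin q) ℝ)
    (f : ι → Fin q → ℝ) : M.mulVec (∑ i ∈ s, f i) = ∑ i ∈ s, M.mulVec (f i) := by
  simp only [← Matrix.mulVecLin_apply]
  exact map_sum M.mulVecLin f s

lemma sum_fin_ite {M : Type*} [AddCommMonoid M] {n k : ℕ} (hk : k ≤ n) (f : ℕ → M) :
    (∑ j : Fin n, if (j : ℕ) < k then f (j : ℕ) else 0) = ∑ j ∈ Finset.range k, f j := by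
  rw [Fin.sum_univ_eq_sum_range (fun j => if j < k then f j else 0), ← Finset.sum_filter]
  congr 1
  ext j
  simp only [Finset.mem_filter, Finset.mem_range]
  omega

lemma frow_mulVec {k : ℕ} (E : Matrix (Fin n) (Fin n) ℝ) (B : Matrix (Fin n) (Fin k) ℝ)
    (v : ℕ → Fin k → ℝ) (s : ℕ) :
    (Frow E B).mulVec (stack v n s) =
      ∑ j ∈ Finset.range n, (E ^ (n - 1 - j)).mulVec (B.mulVec (v (s + j))) := by
  funext i
  simp only [mulVec, dotProduct, Frow, stack, Matrix.of_apply, Fintype.sum_prod_type,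
    Finset.sum_apply, mulVec_mulVec]
  rw [← Fin.sum_univ_eq_sum_range]

lemma akron_mulVec {q : ℕ} (a : Fin n → ℝ) (v : Fin n × Fin q → ℝ) (i : Fin q) :
    ((aKron a q).mulVec v) i = ∑ k : Fin n, a k * v (k, i) := by
  simp [aKron, mulVec, dotProduct, Fintype.sum_prod_type, ite_mul]

lemma mlow_mulVec {k : ℕ} (E : Matrix (Fin n) (Fin n) ℝ) (B : Matrix (Fin n) (Fin k) ℝ)
    (v : ℕ → Fin k → ℝ) (s : ℕ) (p : Fin n) (i : Fin n) :
    ((Mlow E B).mulVec (stack v n s)) (p, i) =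
      (∑ j ∈ Finset.range p, (E ^ ((p : ℕ) - 1 - j)).mulVec (B.mulVec (v (s + j)))) i := by
  have h1 : ((Mlow E B).mulVec (stack v n s)) (p, i) =
      ∑ j : Fin n, if (j : ℕ) < (p : ℕ) then
        (fun jj => ∑ c, (E ^ ((p : ℕ) - 1 - jj) * B) i c * v (s + jj) c) (j : ℕ) else 0 := by
    simp only [mulVec, dotProduct, Mlow, stack, Matrix.of_apply, Fintype.sum_prod_type,
      ite_mul, zero_mul]
    refine Finset.sum_congr rfl fun j _ => ?_
    split_ifs with h
    · refine Finset.sum_congr rfl fun c _ => ?_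
      rw [show (p : ℕ) - (j : ℕ) - 1 = (p : ℕ) - 1 - (j : ℕ) from by omega]
    · simp
  rw [h1,
    sum_fin_ite (le_of_lt p.isLt) (fun jj => ∑ c, (E ^ ((p : ℕ) - 1 - jj) * B) i c * v (s + jj) c)]
  simp [mulVec, dotProduct, Finset.sum_apply, mulVec_mulVec]

lemma sum_mulVec' {p q : ℕ} {ι : Type*} (s : Finset ι) (A : ι → Matrix (Fin p) (Fin q) ℝ)
    (v : Fin q → ℝ) : (∑ i ∈ s, A i).mulVec v = ∑ i ∈ s, (A i).mulVec v := by
  funext i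
  simp only [mulVec, dotProduct, Finset.sum_apply, Matrix.sum_apply, Finset.sum_mul]
  rw [Finset.sum_comm]

/-- static LQG input as product of control and estimation matrices. -/
theorem static_input_separation (n m l : ℕ) (hn : 1 ≤ n) (hm : 1 ≤ m) (hl : 1 ≤ l)
    (E : Matrix (Fin n) (Fin n) ℝ) (F : Matrix (Fin n) (Fin m) ℝ)
    (G : Matrix (Fin n) (Fin l) ℝ) (H : Matrix (Fin m) (Fin n) ℝ)
    (a : Fin n → ℝ) (ha : E ^ n = ∑ k : Fin n, a k • E ^ (k : ℕ))
    (xh : ℕ → Fin n → ℝ) (u : ℕ → Fin m → ℝ) (y : ℕ → Fin l → ℝ)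
    (htraj : IsCompTraj E F G H xh u y) (t : ℕ) :
    u (t + n) =
      (Matrix.fromCols H (1 : Matrix (Fin m) (Fin m) ℝ) * Lest E F G a).mulVec
        (Sum.elim (stack u n t) (stack y n (t + 1))) := by
  obtain ⟨hstate, hout⟩ := htraj
  set SF : ℕ → Fin n → ℝ :=
    fun i => ∑ j ∈ Finset.range i, (E ^ (i - 1 - j)).mulVec (F.mulVec (u (t + j))) with hSF
  set SG : ℕ → Fin n → ℝ :=
    fun i => ∑ j ∈ Finset.range i, (E ^ (i - 1 - j)).mulVec (G.mulVec (y (t + j + 1))) with hSG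
  -- step identities for SF, SG
  have hstepF : ∀ i, SF (i + 1) = E.mulVec (SF i) + F.mulVec (u (t + i)) := by
    intro i
    rw [hSF]
    simp only
    rw [Finset.sum_range_succ, mulVec_sum']
    congr 1
    · refine Finset.sum_congr rfl fun j hj => ?_
      rw [show i + 1 - 1 - j = (i - 1 - j) + 1 from by have := Finset.mem_range.mp hj; omega,
        pow_succ', ← mulVec_mulVec]
    · rw [show i + 1 - 1 - i = 0 from by omega, pow_zero, one_mulVec]
  have hstepG : ∀ i, SG (i + 1) = E.mulVec (SG i) + G.mulVec (y (t + i + 1)) := by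
    intro i
    rw [hSG]
    simp only
    rw [Finset.sum_range_succ, mulVec_sum']
    congr 1
    · refine Finset.sum_congr rfl fun j hj => ?_
      rw [show i + 1 - 1 - j = (i - 1 - j) + 1 from by have := Finset.mem_range.mp hj; omega,
        pow_succ', ← mulVec_mulVec]
    · rw [show i + 1 - 1 - i = 0 from by omega, pow_zero, one_mulVec]
  -- unrolled state
  have unroll : ∀ i, xh (t + i) = (E ^ i).mulVec (xh t) + SF i + SG i := by
    intro i
    induction i with
    | zero => simp [hSF, hSG]
    | succ i ih =>
      have ht : t + (i + 1) = (t + i) + 1 := by omega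
      rw [ht, hstate, ih, hstepF, hstepG, mulVec_add, mulVec_add, mulVec_mulVec, ← pow_succ']
      abel
  -- Reduce the RHS matrix
  rw [Lest, fromCols_mul_fromBlocks, Matrix.one_mul, Matrix.one_mul, add_zero, fromCols_mulVec_sumElim, Matrix.mul_sub, Matrix.mul_sub,
    add_mulVec, sub_mulVec, sub_mulVec]
  simp only [← mulVec_mulVec]
  -- Identify the vector pieces
  have hF : (Frow E F).mulVec (stack u n t) = SF n := by
    rw [frow_mulVec, hSF]
  have hG : (Frow E G).mulVec (stack y n (t + 1)) = SG n := by
    rw [frow_mulVec, hSG]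
    refine Finset.sum_congr rfl fun j _ => ?_
    rw [show t + 1 + j = t + j + 1 from by omega]
  have hMF : (aKron a n).mulVec ((Mlow E F).mulVec (stack u n t)) =
      ∑ k : Fin n, a k • SF (k : ℕ) := by
    funext i
    rw [akron_mulVec]
    simp only [Finset.sum_apply, Pi.smul_apply, smul_eq_mul]
    refine Finset.sum_congr rfl fun k _ => ?_
    rw [mlow_mulVec]
  have hMG : (aKron a n).mulVec ((Mlow E G).mulVec (stack y n (t + 1))) =
      ∑ k : Fin n, a k • SG (k : ℕ) := by
    funext i
    rw [akron_mulVec]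
    simp only [Finset.sum_apply, Pi.smul_apply, smul_eq_mul]
    have hshift : ∀ kk : ℕ,
        (∑ j ∈ Finset.range kk, (E ^ (kk - 1 - j)).mulVec (G.mulVec (y (t + 1 + j)))) = SG kk := by
      intro kk
      simp only [hSG]
      exact Finset.sum_congr rfl fun j _ => by rw [show t + 1 + j = t + j + 1 from by omega]
    refine Finset.sum_congr rfl fun k _ => ?_
    rw [mlow_mulVec, hshift]
  have hau : (aKron a m).mulVec (stack u n t) = ∑ k : Fin n, a k • u (t + (k : ℕ)) := by
    funext i
    rw [akron_mulVec]
    simp [stack]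
  rw [hF, hG, hMF, hMG, hau]
  -- substitute trajectory on both sides
  have hEn : (E ^ n).mulVec (xh t) = ∑ k : Fin n, a k • (E ^ (k : ℕ)).mulVec (xh t) := by
    rw [ha, sum_mulVec']
    exact Finset.sum_congr rfl fun k _ => smul_mulVec _ _ _
  have husub : ∀ k : Fin n, a k • u (t + (k : ℕ)) =
      a k • H.mulVec ((E ^ (k : ℕ)).mulVec (xh t)) + a k • H.mulVec (SF k) +
        a k • H.mulVec (SG k) := by
    intro k
    rw [hout, unroll, mulVec_add, mulVec_add, smul_add, smul_add]
  rw [hout, unroll, hEn]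
  simp only [husub, Finset.sum_add_distrib]
  simp only [mulVec_add, mulVec_sum', mulVec_smul]
  abel

end LQGPaper
end
end

section
/- Fix integers n, l ≥ 1 and real matrices E ∈ ℝ^{n×n}, G ∈ ℝ^{n×l}, and let a = (a_0, …, a_{n−1}) ∈ ℝ^{1×n} be a row vector satisfying E^n = a_0 I_n + a_1 E + ⋯ + a_{n−1} E^{n−1}. Let T ∈ ℝ^{n×n} be the unit lower-triangular Toeplitz matrix with T_{ii} = 1, T_{ij} = −a_{n−i+j} for i > j (1-indexed), and T_{ij} = 0 for i < j. Then F_y − (a ⊗ I_n) M̃_y = F_y · (T ⊗ I_l), and consequently rank(F_y − (a ⊗ I_n) M̃_y) = rank(F_y). In particular, if rank(F_y) = n then F_y − (a ⊗ I_n) M̃_y has full row rank n. (Key rank identity in the proof of Theorem 3.) -/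
/-!
Column block `j` of `(a ⊗ I_n) M̃_y` is `∑_{p > j} a_p E^{p-j-1} G`. Reindexing by the
reflection `p = n + j - q` of `(j, n)` turns it into `∑_{q > j} a_{n-(q-j)} E^{n-1-q} G`, which is
minus the strictly lower part of column `j` of `T` applied to the blocks of `F_y`. Since `T` is
unit lower triangular, `det (T ⊗ I_l) = 1`, so right multiplication by it preserves the rank.
-/
open Matrix

noncomputable section

namespace LQGPaper

variable {n m l : ℕ}

/-- The unit lower-triangular Toeplitz matrix `T` with `T_{ii} = 1` and
`T_{ij} = −a_{n−i+j}` for `i > j` (1-indexed). -/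
def Tmat {n : ℕ} (a : Fin n → ℝ) : Matrix (Fin n) (Fin n) ℝ :=
  Matrix.of fun i j =>
    if i = j then 1
    else if h : (j : ℕ) < (i : ℕ) then
      -a ⟨n - ((i : ℕ) - (j : ℕ)), by have hi := i.isLt; omega⟩
    else 0

/-- The Kronecker product `T ⊗ I_l ∈ ℝ^{ln×ln}`. -/
def kronI {n : ℕ} (T : Matrix (Fin n) (Fin n) ℝ) (l : ℕ) :
    Matrix (Fin n × Fin l) (Fin n × Fin l) ℝ :=
  Matrix.of fun p q => if p.2 = q.2 then T p.1 q.1 else 0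

theorem Fin.lt_self_sub_of_lt {j q : Fin n} (h : j < q) : j < j - q := by
  rw [Fin.lt_def, Fin.coe_sub_iff_lt.mpr h]
  omega

/-- Subtraction in `Fin n` is modulo `n`, so for `j < q` the index `j - q` is `n + j - q`. -/
theorem Fin.sum_Ioi_sub_left {M : Type*} [AddCommMonoid M] (j : Fin n) (f : Fin n → M) :
    ∑ q ∈ Finset.Ioi j, f (j - q) = ∑ q ∈ Finset.Ioi j, f q := by
  have : NeZero n := ⟨j.pos.ne'⟩
  refine Finset.sum_nbij' (j - ·) (j - ·) ?_ ?_ ?_ ?_ fun _ _ => rfl <;>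
  · intro q hq
    simp [Fin.lt_self_sub_of_lt (Finset.mem_Ioi.mp hq)]

theorem Tmat_apply (a : Fin n → ℝ) (i j : Fin n) :
    Tmat a i j = (if i = j then 1 else 0) - if j < i then a (j - i) else 0 := by
  unfold Tmat
  by_cases hij : i = j
  · subst hij; simp
  by_cases hlt : j < i
  · have : (⟨n - (i - j), by omega⟩ : Fin n) = j - i :=
      Fin.ext (by rw [Fin.coe_sub_iff_lt.mpr hlt, Fin.val_mk]; omega)
    simp [hij, hlt, this]
  · simp [hij, hlt]

theorem Tmat_isLowerTriangular (a : Fin n → ℝ) : (Tmat a).IsLowerTriangular := by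
  intro i j hij
  have hij : i < j := hij
  simp [Tmat_apply, hij.ne, hij.not_gt]

theorem det_Tmat (a : Fin n → ℝ) : (Tmat a).det = 1 := by
  simp [det_of_isLowerTriangular _ (Tmat_isLowerTriangular a), Tmat_apply]

theorem sum_mul_Tmat (a x : Fin n → ℝ) (j : Fin n) :
    ∑ q, x q * Tmat a q j = x j - ∑ q ∈ Finset.Ioi j, a (j - q) * x q := by
  simp only [Tmat_apply, mul_sub, Finset.sum_sub_distrib, mul_ite, mul_one, mul_zero,
    Finset.sum_ite_eq', Finset.mem_univ, if_true, ← Finset.sum_filter, Finset.filter_lt_eq_Ioi]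
  simp only [mul_comm]

theorem kronI_eq_kroneckerMap (T : Matrix (Fin n) (Fin n) ℝ) (l : ℕ) :
    kronI T l = kroneckerMap (· * ·) T (1 : Matrix (Fin l) (Fin l) ℝ) := by
  ext p q
  simp [kronI, one_apply]

theorem det_kronI (T : Matrix (Fin n) (Fin n) ℝ) (l : ℕ) : (kronI T l).det = T.det ^ l := by
  simp [kronI_eq_kroneckerMap, det_kronecker]

theorem Frow_mul_kronI_apply {k : ℕ} (E : Matrix (Fin n) (Fin n) ℝ) (B : Matrix (Fin n) (Fin k) ℝ)
    (T : Matrix (Fin n) (Fin n) ℝ) (i j : Fin n) (s : Fin k) :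
    (Frow E B * kronI T k) i (j, s) = ∑ q : Fin n, (E ^ (n - 1 - (q : ℕ)) * B) i s * T q j := by
  simp [mul_apply, Fintype.sum_prod_type, Frow, kronI]

theorem aKron_mul_Mlow_apply {k : ℕ} (a : Fin n → ℝ) (E : Matrix (Fin n) (Fin n) ℝ)
    (B : Matrix (Fin n) (Fin k) ℝ) (i j : Fin n) (s : Fin k) :
    (aKron a n * Mlow E B) i (j, s) =
      ∑ p ∈ Finset.Ioi j, a p * (E ^ ((p : ℕ) - j - 1) * B) i s := by
  rw [mul_apply, Fintype.sum_prod_type]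
  simp only [aKron, Mlow, of_apply, ite_mul, zero_mul, Finset.sum_ite_eq, Finset.mem_univ,
    if_true]
  simp only [mul_ite, mul_zero, Fin.val_fin_lt]
  rw [← Finset.sum_filter, Finset.filter_lt_eq_Ioi]

theorem Frow_sub_aKron_mul_Mlow {k : ℕ} (a : Fin n → ℝ) (E : Matrix (Fin n) (Fin n) ℝ)
    (B : Matrix (Fin n) (Fin k) ℝ) :
    Frow E B - aKron a n * Mlow E B = Frow E B * kronI (Tmat a) k := by
  ext i ⟨j, s⟩
  rw [Matrix.sub_apply, aKron_mul_Mlow_apply, Frow_mul_kronI_apply, sum_mul_Tmat,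
    ← Fin.sum_Ioi_sub_left j]
  congr 1
  refine Finset.sum_congr rfl fun q hq => ?_
  have hjq : j < q := Finset.mem_Ioi.mp hq
  rw [Fin.coe_sub_iff_lt.mpr hjq, show n + j - q - j - 1 = n - 1 - q by omega]

theorem rank_mul_kronI_Tmat {r : Type*} (a : Fin n → ℝ)
    (A : Matrix r (Fin n × Fin l) ℝ) : (A * kronI (Tmat a) l).rank = A.rank :=
  rank_mul_eq_left_of_isUnit_det _ A (by simp [det_kronI, det_Tmat])

theorem rank_identity_general (n l : ℕ)
    (E : Matrix (Fin n) (Fin n) ℝ) (G : Matrix (Fin n) (Fin l) ℝ)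
    (a : Fin n → ℝ) :
    Frow E G - aKron a n * Mlow E G = Frow E G * kronI (Tmat a) l ∧
    (Frow E G - aKron a n * Mlow E G).rank = (Frow E G).rank ∧
    ((Frow E G).rank = n → (Frow E G - aKron a n * Mlow E G).rank = n) := by
  have hrank : (Frow E G - aKron a n * Mlow E G).rank = (Frow E G).rank := by
    rw [Frow_sub_aKron_mul_Mlow, rank_mul_kronI_Tmat]
  exact ⟨Frow_sub_aKron_mul_Mlow a E G, hrank, fun h => hrank.trans h⟩

/-- key rank identity in the proof of Theorem 3. -/
theorem rank_identity (n l : ℕ) (hn : 1 ≤ n) (hl : 1 ≤ l)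
    (E : Matrix (Fin n) (Fin n) ℝ) (G : Matrix (Fin n) (Fin l) ℝ)
    (a : Fin n → ℝ) (ha : E ^ n = ∑ k : Fin n, a k • E ^ (k : ℕ)) :
    Frow E G - aKron a n * Mlow E G = Frow E G * kronI (Tmat a) l ∧
    (Frow E G - aKron a n * Mlow E G).rank = (Frow E G).rank ∧
    ((Frow E G).rank = n → (Frow E G - aKron a n * Mlow E G).rank = n) :=
  rank_identity_general n l E G a

end LQGPaper
end
end

section
/- Fix integers n, m, l ≥ 1 and real matrices E ∈ ℝ^{n×n}, F ∈ ℝ^{n×m}, G ∈ ℝ^{n×l}, and let a = (a_0, …, a_{n−1}) ∈ ℝ^{1×n} be a row vector satisfying E^n = a_0 I_n + a_1 E + ⋯ + a_{n−1} E^{n−1}. Assume that rank(F_y − (a ⊗ I_n) M̃_y) = n and that a ≠ 0. Then the estimation matrix L_est ∈ ℝ^{(n+m)×(m+l)n} has full row rank n + m. (Full row rank of the estimation matrix, used in the proof of Theorem 3; it suggests that the internal representation generated by L_est is of minimal dimension.) -/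
open Matrix

noncomputable section

/-! A vector `(v₁, v₂)` in the left kernel of `L_est` satisfies `v₁ (F_y − (a ⊗ I_n) M̃_y) = 0`
(right block column), so `v₁ = 0` by the rank hypothesis; the left block column then reduces to
`v₂ (a ⊗ I_m) = 0`, whose `(k, j)` entry is `a_k v₂(j)`, so `v₂ = 0` by choosing `a_k ≠ 0`. -/

namespace Matrix

theorem linearIndependent_row_of_rank_eq_card {K ι κ : Type*} [Field K] [Fintype ι]
    [Fintype κ] {M : Matrix ι κ K} (h : M.rank = Fintype.card ι) : LinearIndependent K M.row := by
  rw [linearIndependent_iff_card_eq_finrank_span, Set.finrank, ← rank_eq_finrank_span_row, h]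

theorem linearIndependent_row_fromBlocks_zero₂₂ {R ι κ μ ν : Type*} [Ring R]
    [Fintype ι] [Fintype κ] {A : Matrix ι μ R} {B : Matrix ι ν R} {C : Matrix κ μ R}
    (hB : LinearIndependent R B.row) (hC : LinearIndependent R C.row) :
    LinearIndependent R (fromBlocks A B C 0).row := by
  rw [← vecMul_injective_iff, ← coe_vecMulLinear, injective_iff_map_eq_zero] at hB hC ⊢
  intro v hv
  simp only [vecMulLinear_apply] at hB hC hv
  rw [vecMul_fromBlocks, vecMul_zero, add_zero, ← Sum.elim_zero_zero, Sum.elim_eq_iff] at hv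
  have htop : v ∘ Sum.inl = 0 := hB _ hv.2
  have hbot : v ∘ Sum.inr = 0 := hC _ (by simpa [htop] using hv.1)
  ext (i | k)
  · exact congrFun htop i
  · exact congrFun hbot k

end Matrix

namespace LQGPaper

variable {n : ℕ}

theorem vecMul_aKron_apply (a : Fin n → ℝ) {q : ℕ} (v : Fin q → ℝ) (k : Fin n) (j : Fin q) :
    (v ᵥ* aKron a q) (k, j) = v j * a k := by
  simp [vecMul, dotProduct, aKron]

theorem linearIndependent_row_aKron {a : Fin n → ℝ} (ha : a ≠ 0) (q : ℕ) :
    LinearIndependent ℝ (aKron a q).row := by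
  obtain ⟨k, hk⟩ : ∃ k, a k ≠ 0 := Function.ne_iff.mp ha
  rw [← vecMul_injective_iff, ← coe_vecMulLinear, injective_iff_map_eq_zero]
  intro v hv
  ext j
  simpa [vecMul_aKron_apply, hk] using congrFun hv (k, j)

theorem Lest_full_row_rank_general (n m l : ℕ)
    (E : Matrix (Fin n) (Fin n) ℝ) (F : Matrix (Fin n) (Fin m) ℝ)
    (G : Matrix (Fin n) (Fin l) ℝ)
    (a : Fin n → ℝ)
    (hFy : (Frow E G - aKron a n * Mlow E G).rank = n) (ha0 : a ≠ 0) :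
    (Lest E F G a).rank = n + m := by
  have hFy_rows : LinearIndependent ℝ (Frow E G - aKron a n * Mlow E G).row :=
    linearIndependent_row_of_rank_eq_card (by simpa using hFy)
  have hLest_rows : LinearIndependent ℝ (Lest E F G a).row :=
    linearIndependent_row_fromBlocks_zero₂₂ hFy_rows (linearIndependent_row_aKron ha0 m)
  simpa using hLest_rows.rank_matrix

/-- full row rank of the estimation matrix, proof of Theorem 3. -/
theorem Lest_full_row_rank (n m l : ℕ) (hn : 1 ≤ n) (hm : 1 ≤ m) (hl : 1 ≤ l)
    (E : Matrix (Fin n) (Fin n) ℝ) (F : Matrix (Fin n) (Fin m) ℝ)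
    (G : Matrix (Fin n) (Fin l) ℝ)
    (a : Fin n → ℝ) (ha : E ^ n = ∑ k : Fin n, a k • E ^ (k : ℕ))
    (hFy : (Frow E G - aKron a n * Mlow E G).rank = n) (ha0 : a ≠ 0) :
    (Lest E F G a).rank = n + m :=
  Lest_full_row_rank_general n m l E F G a hFy ha0

end LQGPaper
end
end

section
/- Fix integers n, m, l, r, c ≥ 1 with r ≥ 1, let E ∈ ℝ^{n×n}, F ∈ ℝ^{n×m}, G ∈ ℝ^{n×l}, H ∈ ℝ^{m×n}, and let (x̂, u, y) be a compensator trajectory. Set Ē = E + F H. Then for every t ≥ 0 the data matrix factors as H_{r,c}(t) = [[F̄_x , F̄_y] ; [0 , I_{lr}]] · [[x̂(t), x̂(t+1), …, x̂(t+c−1)] ; [Y_r(t+1), Y_r(t+2), …, Y_r(t+c)]], where the first factor is an ((m+l)r)×(n+lr) matrix and the second is an (n+lr)×c matrix whose k-th column is (x̂(t+k) ; Y_r(t+k+1)). (Factorization of the input-output data matrix in the proof of Lemma 1.) -/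
open Matrix

noncomputable section

namespace LQGPaper

variable {n m l : ℕ}

/-- The block column `F̄_x = (H; HĒ; …; HĒ^{r-1}) ∈ ℝ^{mr×n}`. -/
def ObsMat {n m : ℕ} (r : ℕ) (Eb : Matrix (Fin n) (Fin n) ℝ)
    (H : Matrix (Fin m) (Fin n) ℝ) : Matrix (Fin r × Fin m) (Fin n) ℝ :=
  Matrix.of fun p j => (H * Eb ^ (p.1 : ℕ)) p.2 j

/-- `F̄_y ∈ ℝ^{mr×lr}`: block matrix whose `(i,j)` block (0-indexed, blocks `m × l`)
is `H Ē^{i-j-1} G` for `i > j` and `0` otherwise. -/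
def ToepMat {n m l : ℕ} (r : ℕ) (Eb : Matrix (Fin n) (Fin n) ℝ)
    (G : Matrix (Fin n) (Fin l) ℝ) (H : Matrix (Fin m) (Fin n) ℝ) :
    Matrix (Fin r × Fin m) (Fin r × Fin l) ℝ :=
  Matrix.of fun p q =>
    if (q.1 : ℕ) < (p.1 : ℕ) then
      (H * Eb ^ ((p.1 : ℕ) - (q.1 : ℕ) - 1) * G) p.2 q.2
    else 0

/-- The input-output data matrix `H_{r,c}(t)` whose `k`-th column is
`(U_r(t+k); Y_r(t+k+1))`. -/
def dataMat {m l : ℕ} (u : ℕ → Fin m → ℝ) (y : ℕ → Fin l → ℝ) (r c t : ℕ) :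
    Matrix ((Fin r × Fin m) ⊕ (Fin r × Fin l)) (Fin c) ℝ :=
  Matrix.of fun i k =>
    Sum.elim (fun p : Fin r × Fin m => u (t + (k : ℕ) + (p.1 : ℕ)) p.2)
      (fun p : Fin r × Fin l => y (t + (k : ℕ) + 1 + (p.1 : ℕ)) p.2) i

/-- The matrix `N` whose `k`-th column is `(x̂(t+k); Y_r(t+k+1))`. -/
def stateMat {n l : ℕ} (xh : ℕ → Fin n → ℝ) (y : ℕ → Fin l → ℝ) (r c t : ℕ) :
    Matrix (Fin n ⊕ (Fin r × Fin l)) (Fin c) ℝ :=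
  Matrix.of fun i k =>
    Sum.elim (fun j : Fin n => xh (t + (k : ℕ)) j)
      (fun p : Fin r × Fin l => y (t + (k : ℕ) + 1 + (p.1 : ℕ)) p.2) i

/-!
Closing the loop `u = H x̂` turns the compensator into `x̂(t+1) = Ē x̂(t) + G y(t+1)`, so by
variation of constants `u(s+p) = H Ē^p x̂(s) + ∑_{j<p} H Ē^{p-j-1} G y(s+1+j)`, i.e.
`U_r(s) = F̄_x x̂(s) + F̄_y Y_r(s+1)`. Applied to `s = t+k` this is the upper block row of the
`k`-th column of the factorization; the lower block row just copies `Y_r(t+k+1)`.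
-/

section LinearRecurrence

variable {ι κ R : Type*} [Fintype ι] [DecidableEq ι] [Fintype κ] [Semiring R]

theorem eq_pow_mulVec_add_sum_of_succ_eq (A : Matrix ι ι R) (B : Matrix ι κ R)
    {x : ℕ → ι → R} {w : ℕ → κ → R} (h : ∀ t, x (t + 1) = A *ᵥ x t + B *ᵥ w (t + 1))
    (s i : ℕ) :
    x (s + i) = A ^ i *ᵥ x s + ∑ j ∈ Finset.range i, (A ^ (i - j - 1) * B) *ᵥ w (s + 1 + j) := by
  induction i with
  | zero => simp
  | succ i ih =>
    have hsum : A *ᵥ ∑ j ∈ Finset.range i, (A ^ (i - j - 1) * B) *ᵥ w (s + 1 + j) =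
        ∑ j ∈ Finset.range i, (A ^ (i + 1 - j - 1) * B) *ᵥ w (s + 1 + j) := by
      rw [mulVec_sum]
      refine Finset.sum_congr rfl fun j hj => ?_
      rw [mulVec_mulVec, ← Matrix.mul_assoc, ← pow_succ',
        show i - j - 1 + 1 = i + 1 - j - 1 by simp at hj; omega]
    rw [← add_assoc, h, ih, mulVec_add, mulVec_mulVec, ← pow_succ', hsum, Finset.sum_range_succ,
      add_assoc, Nat.add_sub_cancel_left, Nat.sub_self, pow_zero, Matrix.one_mul,
      add_right_comm s i 1]

end LinearRecurrence

theorem obsMat_mulVec_apply {n m : ℕ} (r : ℕ) (A : Matrix (Fin n) (Fin n) ℝ)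
    (H : Matrix (Fin m) (Fin n) ℝ) (x : Fin n → ℝ) (p : Fin r) (a : Fin m) :
    (ObsMat r A H *ᵥ x) (p, a) = ((H * A ^ (p : ℕ)) *ᵥ x) a :=
  rfl

theorem toepMat_mulVec_stack_apply {n m l : ℕ} (r : ℕ) (A : Matrix (Fin n) (Fin n) ℝ)
    (G : Matrix (Fin n) (Fin l) ℝ) (H : Matrix (Fin m) (Fin n) ℝ) (w : ℕ → Fin l → ℝ)
    (s : ℕ) (p : Fin r) (a : Fin m) :
    (ToepMat r A G H *ᵥ stack w r s) (p, a) =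
      ∑ j ∈ Finset.range p, ((H * A ^ ((p : ℕ) - j - 1) * G) *ᵥ w (s + j)) a := by
  have hblock : ∀ q : Fin r, ∑ b : Fin l, ToepMat r A G H (p, a) (q, b) * stack w r s (q, b) =
      if (q : ℕ) < p then ((H * A ^ ((p : ℕ) - q - 1) * G) *ᵥ w (s + q)) a else 0 := by
    intro q
    simp only [ToepMat, stack, of_apply]
    split_ifs <;> simp [mulVec, dotProduct]
  have hfilter : (Finset.range r).filter (· < (p : ℕ)) = Finset.range p := by
    ext j
    simp only [Finset.mem_filter, Finset.mem_range]
    omega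
  rw [mulVec, dotProduct, Fintype.sum_prod_type, Finset.sum_congr rfl fun q _ => hblock q,
    Fin.sum_univ_eq_sum_range (fun j => if j < (p : ℕ) then
      ((H * A ^ ((p : ℕ) - j - 1) * G) *ᵥ w (s + j)) a else 0), ← Finset.sum_filter, hfilter]

section CompensatorTrajectory

variable {n m l : ℕ} {E : Matrix (Fin n) (Fin n) ℝ} {F : Matrix (Fin n) (Fin m) ℝ}
  {G : Matrix (Fin n) (Fin l) ℝ} {H : Matrix (Fin m) (Fin n) ℝ}
  {xh : ℕ → Fin n → ℝ} {u : ℕ → Fin m → ℝ} {y : ℕ → Fin l → ℝ}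

theorem IsCompTraj.state_succ (htraj : IsCompTraj E F G H xh u y) (t : ℕ) :
    xh (t + 1) = (E + F * H) *ᵥ xh t + G *ᵥ y (t + 1) := by
  rw [htraj.1, htraj.2, add_mulVec, mulVec_mulVec]

theorem IsCompTraj.stack_input_eq (htraj : IsCompTraj E F G H xh u y) (r s : ℕ) :
    stack u r s =
      ObsMat r (E + F * H) H *ᵥ xh s + ToepMat r (E + F * H) G H *ᵥ stack y r (s + 1) := by
  funext ⟨p, a⟩
  rw [Pi.add_apply, obsMat_mulVec_apply, toepMat_mulVec_stack_apply]
  simp only [stack]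
  rw [htraj.2, eq_pow_mulVec_add_sum_of_succ_eq _ _ htraj.state_succ s p, mulVec_add, mulVec_mulVec,
    mulVec_sum, Pi.add_apply, Finset.sum_apply]
  simp only [mulVec_mulVec, Matrix.mul_assoc]

end CompensatorTrajectory

theorem data_matrix_factorization_general (n m l r c : ℕ)
    (E : Matrix (Fin n) (Fin n) ℝ) (F : Matrix (Fin n) (Fin m) ℝ)
    (G : Matrix (Fin n) (Fin l) ℝ) (H : Matrix (Fin m) (Fin n) ℝ)
    (xh : ℕ → Fin n → ℝ) (u : ℕ → Fin m → ℝ) (y : ℕ → Fin l → ℝ)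
    (htraj : IsCompTraj E F G H xh u y) (t : ℕ) :
    dataMat u y r c t =
      Matrix.fromBlocks (ObsMat r (E + F * H) H) (ToepMat r (E + F * H) G H) 0 1 *
        stateMat xh y r c t := by
  refine Matrix.ext fun i k => ?_
  change Sum.elim (stack u r (t + k)) (stack y r (t + k + 1)) i =
    (fromBlocks (ObsMat r (E + F * H) H) (ToepMat r (E + F * H) G H) 0 1 *ᵥ
      Sum.elim (xh (t + k)) (stack y r (t + k + 1))) i
  rw [fromBlocks_mulVec, htraj.stack_input_eq]
  simp

/-- factorization of the data matrix, proof of Lemma 1. -/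
theorem data_matrix_factorization (n m l r c : ℕ)
    (hn : 1 ≤ n) (hm : 1 ≤ m) (hl : 1 ≤ l) (hr : 1 ≤ r) (hc : 1 ≤ c)
    (E : Matrix (Fin n) (Fin n) ℝ) (F : Matrix (Fin n) (Fin m) ℝ)
    (G : Matrix (Fin n) (Fin l) ℝ) (H : Matrix (Fin m) (Fin n) ℝ)
    (xh : ℕ → Fin n → ℝ) (u : ℕ → Fin m → ℝ) (y : ℕ → Fin l → ℝ)
    (htraj : IsCompTraj E F G H xh u y) (t : ℕ) :
    dataMat u y r c t =
      Matrix.fromBlocks (ObsMat r (E + F * H) H) (ToepMat r (E + F * H) G H) 0 1 *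
        stateMat xh y r c t :=
  data_matrix_factorization_general n m l r c E F G H xh u y htraj t

end LQGPaper
end
end

section
/- Fix integers n, m, l ≥ 1, let E ∈ ℝ^{n×n}, F ∈ ℝ^{n×m}, G ∈ ℝ^{n×l}, H ∈ ℝ^{m×n}, and let (x̂, u, y) be a compensator trajectory. Fix i ∈ {1,…,m} and assume F_x^i ∈ ℝ^{n×n} is invertible. Then for every t ≥ 0 the compensator state can be reconstructed from the window of n inputs and n outputs: x̂(t) = (F_x^i)^{−1} ( (P_i − M_u^i) U_n(t) − M_y^i Y_n(t+1) ). (State-reconstruction step in the proof of Lemma 2 in the Appendix.) -/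
/-!
Unrolling `x̂(s+1) = E x̂(s) + F u(s) + G y(s+1)` for `k < n` steps and applying `H` gives
`u(t+k) = H E^k x̂(t) + ∑_{j<k} H E^{k-j-1} (F u(t+j) + G y(t+j+1))`, which, stacked over
`k = 0, …, n-1`, is the block identity `F_x x̂(t) = (I - M_u) U_n(t) - M_y Y_n(t+1)`.
Multiplying it on the left by `P_i` and inverting `P_i F_x` gives the reconstruction formula.
-/

open Matrix

noncomputable section

theorem Matrix.eq_pow_mulVec_add_sum_of_recurrence {R ι : Type*} [Semiring R] [Fintype ι]
    [DecidableEq ι] {E : Matrix ι ι R} {x w : ℕ → ι → R}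
    (hx : ∀ t, x (t + 1) = E *ᵥ x t + w t) (t k : ℕ) :
    x (t + k) = E ^ k *ᵥ x t + ∑ j ∈ Finset.range k, E ^ (k - j - 1) *ᵥ w (t + j) := by
  induction k with
  | zero => simp
  | succ k ih =>
    have hpow : ∀ j ∈ Finset.range k, E *ᵥ (E ^ (k - j - 1) *ᵥ w (t + j)) =
        E ^ (k + 1 - j - 1) *ᵥ w (t + j) := fun j hj => by
      rw [mulVec_mulVec, ← pow_succ', show k - j - 1 + 1 = k + 1 - j - 1 by
        have := Finset.mem_range.mp hj; omega]
    rw [← add_assoc, hx, ih, mulVec_add, mulVec_mulVec, ← pow_succ', mulVec_sum,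
      Finset.sum_congr rfl hpow, Finset.sum_range_succ, add_tsub_cancel_left, Nat.sub_self,
      pow_zero, one_mulVec, add_assoc]

namespace LQGPaper

theorem Fx_mulVec_apply (E : Matrix (Fin n) (Fin n) ℝ) (H : Matrix (Fin m) (Fin n) ℝ)
    (x : Fin n → ℝ) (p : Fin n × Fin m) :
    (Fx E H *ᵥ x) p = (H *ᵥ (E ^ (p.1 : ℕ) *ᵥ x)) p.2 := by
  rw [mulVec_mulVec]
  rfl

theorem MlowH_mulVec_stack_apply {k : ℕ} (E : Matrix (Fin n) (Fin n) ℝ)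
    (B : Matrix (Fin n) (Fin k) ℝ) (H : Matrix (Fin m) (Fin n) ℝ) (v : ℕ → Fin k → ℝ) (s : ℕ)
    (p : Fin n × Fin m) :
    (MlowH E B H *ᵥ stack v n s) p =
      ∑ j ∈ Finset.range p.1, ((H * E ^ ((p.1 : ℕ) - j - 1) * B) *ᵥ v (s + j)) p.2 := by
  have hrange : (Finset.range n).filter (· < (p.1 : ℕ)) = Finset.range p.1 := by
    ext j
    simp only [Finset.mem_filter, Finset.mem_range]
    omega
  simp only [mulVec, dotProduct, Fintype.sum_prod_type, MlowH, of_apply, stack, ite_mul,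
    zero_mul, Finset.sum_ite_irrel, Finset.sum_const_zero]
  rw [Fin.sum_univ_eq_sum_range (fun a => if a < (p.1 : ℕ) then
    ∑ b, (H * E ^ ((p.1 : ℕ) - a - 1) * B) p.2 b * v (s + a) b else 0), ← Finset.sum_filter,
    hrange]

namespace IsCompTraj

variable {E : Matrix (Fin n) (Fin n) ℝ} {F : Matrix (Fin n) (Fin m) ℝ}
  {G : Matrix (Fin n) (Fin l) ℝ} {H : Matrix (Fin m) (Fin n) ℝ}
  {xh : ℕ → Fin n → ℝ} {u : ℕ → Fin m → ℝ} {y : ℕ → Fin l → ℝ}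

theorem state_add (htraj : IsCompTraj E F G H xh u y) (t k : ℕ) :
    xh (t + k) = E ^ k *ᵥ xh t +
      ∑ j ∈ Finset.range k, E ^ (k - j - 1) *ᵥ (F *ᵥ u (t + j) + G *ᵥ y (t + j + 1)) := by
  refine Matrix.eq_pow_mulVec_add_sum_of_recurrence (x := xh)
    (w := fun s => F *ᵥ u s + G *ᵥ y (s + 1)) (fun s => ?_) t k
  rw [htraj.1, add_assoc]

theorem Fx_mulVec (htraj : IsCompTraj E F G H xh u y) (t : ℕ) :
    Fx E H *ᵥ xh t =
      stack u n t - MlowH E F H *ᵥ stack u n t - MlowH E G H *ᵥ stack y n (t + 1) := by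
  ext p
  have hu : u (t + p.1) = H *ᵥ xh (t + p.1) := htraj.2 _
  simp only [Pi.sub_apply, Fx_mulVec_apply, MlowH_mulVec_stack_apply, stack, hu,
    htraj.state_add, mulVec_add, mulVec_sum, mulVec_mulVec, ← Matrix.mul_assoc,
    Finset.sum_apply, Finset.sum_add_distrib, Pi.add_apply, add_right_comm t 1]
  abel

theorem eq_inv_mulVec_of_isUnit (htraj : IsCompTraj E F G H xh u y)
    (P : Matrix (Fin n) (Fin n × Fin m) ℝ) (hP : IsUnit (P * Fx E H)) (t : ℕ) :
    xh t = (P * Fx E H)⁻¹ *ᵥ ((P - P * MlowH E F H) *ᵥ stack u n t -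
      (P * MlowH E G H) *ᵥ stack y n (t + 1)) := by
  have hPFx := congrArg (P *ᵥ ·) (htraj.Fx_mulVec t)
  simp only [mulVec_sub, mulVec_mulVec] at hPFx
  rw [sub_mulVec, ← hPFx, mulVec_mulVec, nonsing_inv_mul _ ((isUnit_iff_isUnit_det _).mp hP),
    one_mulVec]

end IsCompTraj

theorem state_reconstruction_general (n m l : ℕ)
    (E : Matrix (Fin n) (Fin n) ℝ) (F : Matrix (Fin n) (Fin m) ℝ)
    (G : Matrix (Fin n) (Fin l) ℝ) (H : Matrix (Fin m) (Fin n) ℝ)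
    (xh : ℕ → Fin n → ℝ) (u : ℕ → Fin m → ℝ) (y : ℕ → Fin l → ℝ)
    (htraj : IsCompTraj E F G H xh u y)
    (i : Fin m) (hFxi : IsUnit (Pmat n i * Fx E H)) (t : ℕ) :
    xh t =
      ((Pmat n i * Fx E H)⁻¹).mulVec
        ((Pmat n i - Pmat n i * MlowH E F H).mulVec (stack u n t) -
          (Pmat n i * MlowH E G H).mulVec (stack y n (t + 1))) :=
  htraj.eq_inv_mulVec_of_isUnit (Pmat n i) hFxi t

/-- state reconstruction from a window of inputs and outputs,
proof of Lemma 2. -/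
theorem state_reconstruction (n m l : ℕ) (hn : 1 ≤ n) (hm : 1 ≤ m) (hl : 1 ≤ l)
    (E : Matrix (Fin n) (Fin n) ℝ) (F : Matrix (Fin n) (Fin m) ℝ)
    (G : Matrix (Fin n) (Fin l) ℝ) (H : Matrix (Fin m) (Fin n) ℝ)
    (xh : ℕ → Fin n → ℝ) (u : ℕ → Fin m → ℝ) (y : ℕ → Fin l → ℝ)
    (htraj : IsCompTraj E F G H xh u y)
    (i : Fin m) (hFxi : IsUnit (Pmat n i * Fx E H)) (t : ℕ) :
    xh t =
      ((Pmat n i * Fx E H)⁻¹).mulVec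
        ((Pmat n i - Pmat n i * MlowH E F H).mulVec (stack u n t) -
          (Pmat n i * MlowH E G H).mulVec (stack y n (t + 1))) :=
  state_reconstruction_general n m l E F G H xh u y htraj i hFxi t

end LQGPaper
end
end
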